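/- arXiv:1409.0496 — 2 statements merged into one kernel-verified Lean document; each statement's English description precedes it below -/
import Mathlib

section
/- If φ is a numbering with the Kolmogorov property, then for all but finitely many x ∈ MIN_φ it holds that C(x) ≥ |x| − log₂|x|. -/
/-- A numbering: a family of partial functions `φ_e : ℕ →. ℕ` such that the
two-variable map `(e, x) ↦ φ_e x` is partial recursive. -/
def Numbering' (φ : ℕ → ℕ →. ℕ) : Prop := Partrec₂ φ

/-- `φ` is acceptable: every numbering translates into it via a computable function. -/
def Acceptable (φ : ℕ → ℕ →. ℕ) : Prop :=
  ∀ ψ : ℕ → ℕ →. ℕ, Numbering' ψ → ∃ f : ℕ → ℕ, Computable f ∧ ∀ e, φ (f e) = ψ e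

/-- `φ` has the Kolmogorov property: every numbering translates into it with
linearly bounded (not necessarily computable) translation. -/
def KolmogorovProperty (φ : ℕ → ℕ →. ℕ) : Prop :=
  ∀ ψ : ℕ → ℕ →. ℕ, Numbering' ψ → ∃ c : ℕ, ∀ e, ∃ j, j ≤ c * e + c ∧ φ j = ψ e

/-- `φ` is computably bounded: every numbering translates into it with a
computable bound on the translated index. -/
def ComputablyBounded (φ : ℕ → ℕ →. ℕ) : Prop :=
  ∀ ψ : ℕ → ℕ →. ℕ, Numbering' ψ → ∃ f : ℕ → ℕ, Computable f ∧ ∀ e, ∃ j, j ≤ f e ∧ φ j = ψ e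

/-- `φ` is polynomially bounded with degree `p`. -/
def PolyBounded (φ : ℕ → ℕ →. ℕ) (p : ℕ) : Prop :=
  ∀ ψ : ℕ → ℕ →. ℕ, Numbering' ψ → ∃ c : ℕ, ∀ e, ∃ j, j ≤ c * e ^ p + c ∧ φ j = ψ e

/-- The set of `φ`-minimal indices. -/
def MINset (φ : ℕ → ℕ →. ℕ) : Set ℕ := {e | ∀ j < e, φ j ≠ φ e}

/-- Minimal indices of functions converging exactly on input 0. -/
def Mset (φ : ℕ → ℕ →. ℕ) : Set ℕ :=
  {e | e ∈ MINset φ ∧ (φ e 0).Dom ∧ ∀ x ≥ 1, ¬ (φ e x).Dom}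

/-- `minIndex φ e` is the minimal index computing the same function as `e`. -/
noncomputable def minIndex (φ : ℕ → ℕ →. ℕ) (e : ℕ) : ℕ := sInf {j | φ j = φ e}

/-- A partial recursive `U` is optimal: every partial recursive `V` is simulated
with only linear increase of programs. -/
def OptimalMachine (U : ℕ →. ℕ) : Prop :=
  Nat.Partrec U ∧ ∀ V : ℕ →. ℕ, Nat.Partrec V →
    ∃ c : ℕ, ∀ p, (V p).Dom → ∃ q, q ≤ c * p + c ∧ U q = V p

/-- Kolmogorov complexity of `x` with respect to `U`: the least binary length of
a `U`-program for `x`. (`Nat.size q` is the binary length of `q`.) -/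
noncomputable def Cpx (U : ℕ →. ℕ) (x : ℕ) : ℕ :=
  sInf {n | ∃ q, U q = Part.some x ∧ Nat.size q = n}

/-- Kolmogorov complexity of (the canonical code of) a finite set. -/
noncomputable def CpxFinset (U : ℕ →. ℕ) (A : Finset ℕ) : ℕ :=
  Cpx U (Encodable.encode A)

/-- `A` is `(m,k)`-recursive: a computable labelling of `k`-tuples that is
correct in at least `m` coordinates on every tuple. -/
def MKRecursive (m k : ℕ) (A : Set ℕ) : Prop :=
  ∃ f : (Fin k → ℕ) → Fin k → Bool, Computable f ∧
    ∀ x : Fin k → ℕ, m ≤ {i : Fin k | (f x i = true ↔ x i ∈ A)}.ncard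

/-!
Feed `U` into `φ`: `ψ_p = φ_{U p}` is a numbering, so the Kolmogorov property gives a `c` with
`φ_j = φ_{U q}` for some `j ≤ c q + c`. When `x = U q` is `φ`-minimal this forces `x ≤ j`, so
`|x| ≤ |q| + |c|`, i.e. `C(x) ≥ |x| - |c|`. Once `|x| ≥ 2^|c|` we have `log₂ |x| ≥ |c|`, and only
finitely many `x` have `|x| < 2^|c|`.
-/

lemma Numbering'.bind {φ : ℕ → ℕ →. ℕ} (hφ : Numbering' φ) {U : ℕ →. ℕ} (hU : Nat.Partrec U) :
    Numbering' fun p n => (U p).bind fun e => φ e n :=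
  ((Partrec.nat_iff.2 hU).comp Computable.fst).bind
    (hφ.comp Computable.snd (Computable.snd.comp Computable.fst))

lemma le_of_mem_MINset_of_eq {φ : ℕ → ℕ →. ℕ} {x j : ℕ} (hx : x ∈ MINset φ)
    (h : φ j = φ x) : x ≤ j :=
  not_lt.1 fun hjx => hx j hjx h

lemma KolmogorovProperty.exists_le_of_mem_MINset {φ ψ : ℕ → ℕ →. ℕ} (hK : KolmogorovProperty φ)
    (hψ : Numbering' ψ) : ∃ c, ∀ e, ∀ x ∈ MINset φ, φ x = ψ e → x ≤ c * e + c := by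
  obtain ⟨c, hc⟩ := hK ψ hψ
  refine ⟨c, fun e x hx hxe => ?_⟩
  obtain ⟨j, hj, hφj⟩ := hc e
  exact (le_of_mem_MINset_of_eq hx (hφj.trans hxe.symm)).trans hj

lemma OptimalMachine.exists_size_eq_Cpx {U : ℕ →. ℕ} (hU : OptimalMachine U) (x : ℕ) :
    ∃ q, U q = Part.some x ∧ Nat.size q = Cpx U x := by
  obtain ⟨c, hc⟩ := hU.2 (fun _ => Part.some x) (Partrec.nat_iff.1 (Partrec.const' _))
  obtain ⟨q, -, hq⟩ := hc 0 trivial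
  exact Nat.sInf_mem (s := {n | ∃ q, U q = Part.some x ∧ Nat.size q = n}) ⟨_, q, hq, rfl⟩

lemma Nat.size_le_size_add_size_of_le_mul_add {x c q : ℕ} (h : x ≤ c * q + c) :
    x.size ≤ q.size + c.size := by
  have hq : q + 1 ≤ 2 ^ q.size := q.lt_size_self
  have hc : c < 2 ^ c.size := c.lt_size_self
  rw [Nat.size_le, pow_add]
  calc x ≤ c * (q + 1) := by rw [mul_add_one]; exact h
    _ < 2 ^ q.size * 2 ^ c.size := by nlinarith [Nat.one_le_two_pow (n := q.size)]

lemma size_le_Cpx_add_of_mem_MINset {φ : ℕ → ℕ →. ℕ} (hφ : Numbering' φ)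
    (hK : KolmogorovProperty φ) {U : ℕ →. ℕ} (hU : OptimalMachine U) :
    ∃ c, ∀ x ∈ MINset φ, x.size ≤ Cpx U x + c := by
  obtain ⟨c, hc⟩ := hK.exists_le_of_mem_MINset (hφ.bind hU.1)
  refine ⟨c.size, fun x hx => ?_⟩
  obtain ⟨q, hUq, hq⟩ := hU.exists_size_eq_Cpx x
  have hxq : x ≤ c * q + c := hc q x hx (by funext n; simp [hUq])
  exact hq ▸ Nat.size_le_size_add_size_of_le_mul_add hxq

/-- If `φ` has the Kolmogorov property then for all but finitely many
`x ∈ MIN_φ`, `C(x) ≥ |x| - log₂ |x|`  (`Nat.size x` is the binary length). -/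
theorem complexity_ge_size_sub_log_on_MIN
    (φ : ℕ → ℕ →. ℕ) (hφ : Numbering' φ) (hK : KolmogorovProperty φ)
    (U : ℕ →. ℕ) (hU : OptimalMachine U) :
    {x | x ∈ MINset φ ∧ Cpx U x < Nat.size x - Nat.log 2 (Nat.size x)}.Finite := by
  obtain ⟨c, hc⟩ := size_le_Cpx_add_of_mem_MINset hφ hK hU
  refine (Set.finite_Iio (2 ^ 2 ^ c)).subset fun x ⟨hxMIN, hxC⟩ => ?_
  by_contra hx
  have hcs : 2 ^ c < x.size := Nat.lt_size.2 (not_lt.1 hx)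
  have hclog : c ≤ Nat.log 2 x.size := Nat.le_log_of_pow_le one_lt_two hcs.le
  have hsize := hc x hxMIN
  omega
end

section
/- For every computable order g (a computable, nondecreasing, unbounded function g : ℕ → ℕ) with g(0) ≥ 1, there exist an acceptable numbering ψ and a computable function f mapping each e ∈ ℕ to a finite set f(e) ⊆ ℕ of cardinality at most g(e) such that min_ψ(e) ∈ f(e) for all e. -/
/-!
Slow the standard numbering `φ` down to `ψ_e = φ_{r e}`, where `r` starts at `0`, climbs by at
most one per step and stays below `g`. Then `r` is monotone and onto, and `φ_v` first appears in
`ψ` at the computable index `s v`, the least `e` with `r e = v`; so `ψ` is still acceptable, and a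
`ψ`-minimal index must be the first index `s v` of its block. Since `min_ψ(e) ≤ e`, it lies in
`{s 0, …, s (r e)}`, a set of at most `r e + 1 ≤ g e` elements.
-/

open Denumerable Encodable Function Nat.Partrec

section FirstPreimage

variable {r : ℕ → ℕ}

theorem Nat.surjective_of_le_succ (hzero : r 0 = 0) (hstep : ∀ n, r (n + 1) ≤ r n + 1)
    (hunbdd : ∀ v, ∃ n, v ≤ r n) : Surjective r := by
  intro v
  have hreach := Nat.find_spec (hunbdd v)
  -- the first time `r` reaches `v` it cannot have jumped over it
  rcases h : Nat.find (hunbdd v) with _ | k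
  · exact ⟨0, by rw [h] at hreach; omega⟩
  · have hbefore : ¬v ≤ r k := Nat.find_min (hunbdd v) (by omega)
    rw [h] at hreach
    exact ⟨k + 1, by have := hstep k; omega⟩

def firstPreimage (hr : Surjective r) (v : ℕ) : ℕ := Nat.find (hr v)

variable (hr : Surjective r)

theorem apply_firstPreimage (v : ℕ) : r (firstPreimage hr v) = v := Nat.find_spec (hr v)

theorem firstPreimage_le {v j : ℕ} (h : r j = v) : firstPreimage hr v ≤ j := Nat.find_min' _ h

theorem firstPreimage_strictMono (hmono : Monotone r) : StrictMono (firstPreimage hr) := by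
  intro v w hvw
  by_contra! hle
  have := hmono hle
  rw [apply_firstPreimage hr, apply_firstPreimage hr] at this
  omega

theorem computable_firstPreimage (hc : Computable r) : Computable (firstPreimage hr) :=
  Computable.find (ComputablePred.computable_iff.2 ⟨fun p => decide (r p.2 = p.1),
    (Primrec.eq.decide.to_comp.comp (hc.comp .snd) .fst), by ext; simp⟩) hr

end FirstPreimage

section FinsetEncoding

theorem computable_map_range {α : Type*} [Primcodable α] {d : ℕ → α} (hd : Computable d) :
    Computable fun n => (List.range n).map d :=
  (Computable.nat_rec .id (.const []) (Computable.list_concat.comp (Computable.snd.comp .snd)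
    (hd.comp (Computable.fst.comp .snd))).to₂).of_eq fun n => by
    dsimp only [id]
    induction n with
    | zero => rfl
    | succ n ih => simp [ih, List.range_succ]

/-- The encoding of `Finset ℕ` stores a finite set through the gaps of its increasing
enumeration. -/
def gaps (s : ℕ → ℕ) : ℕ → ℕ
  | 0 => s 0
  | k + 1 => s (k + 1) - s k - 1

theorem computable_gaps {s : ℕ → ℕ} (hs : Computable s) : Computable (gaps s) :=
  (Computable.nat_casesOn .id (hs.comp (.const 0)) (Primrec.nat_sub.to_comp.comp
    (Primrec.nat_sub.to_comp.comp (hs.comp (Computable.succ.comp .snd)) (hs.comp .snd))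
    (.const 1)).to₂).of_eq fun n => by cases n <;> rfl

variable {s : ℕ → ℕ} (hs : StrictMono s)
include hs

theorem raise'_map_gaps_range' (n k : ℕ) :
    raise' ((List.range' (k + 1) n).map (gaps s)) (s k + 1) = (List.range' (k + 1) n).map s := by
  induction n generalizing k with
  | zero => rfl
  | succ n ih =>
    have hlt : s k < s (k + 1) := hs k.lt_succ_self
    rw [List.range'_succ, List.map_cons, List.map_cons, raise', gaps,
      show s (k + 1) - s k - 1 + (s k + 1) = s (k + 1) by omega, ih (k + 1)]

theorem raise'_map_gaps_range (n : ℕ) :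
    raise' ((List.range n).map (gaps s)) 0 = (List.range n).map s := by
  cases n with
  | zero => rfl
  | succ n =>
    rw [List.range_eq_range', List.range'_succ, List.map_cons, List.map_cons, raise', gaps,
      Nat.add_zero, raise'_map_gaps_range' hs]

theorem computable_image_range (hc : Computable s) :
    Computable fun n => (Finset.range n).image s := by
  refine ((Computable.ofNat (Finset ℕ)).comp
    (Computable.encode.comp (computable_map_range (computable_gaps hc)))).of_eq fun n => ?_
  show Finset.map (eqv ℕ).symm.toEmbedding (raise'Finset (ofNat (List ℕ) (encode _)) 0) = _
  ext x
  simp [raise'Finset, ofNat_encode, raise'_map_gaps_range hs, Denumerable.eqv]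

end FinsetEncoding

section MinIndex

variable (φ : ℕ → ℕ →. ℕ)

theorem minIndex_le_of_eq {j e : ℕ} (h : φ j = φ e) : minIndex φ e ≤ j := Nat.sInf_le h

theorem minIndex_le (e : ℕ) : minIndex φ e ≤ e := minIndex_le_of_eq φ rfl

theorem apply_minIndex (e : ℕ) : φ (minIndex φ e) = φ e :=
  Nat.sInf_mem (s := {j | φ j = φ e}) ⟨e, rfl⟩

theorem minIndex_comp_mem_image {r : ℕ → ℕ} (hr : Surjective r) (hmono : Monotone r) (e : ℕ) :
    minIndex (fun j => φ (r j)) e ∈ (Finset.range (r e + 1)).image (firstPreimage hr) := by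
  set m := minIndex (fun j => φ (r j)) e
  have hfirst : firstPreimage hr (r m) = m :=
    le_antisymm (firstPreimage_le hr rfl) <| minIndex_le_of_eq _ <| by
      rw [apply_firstPreimage hr, apply_minIndex (fun j => φ (r j))]
  exact Finset.mem_image.2
    ⟨r m, Finset.mem_range_succ_iff.2 (hmono (minIndex_le _ e)), hfirst⟩

end MinIndex

section Acceptable

theorem Numbering'.comp {φ : ℕ → ℕ →. ℕ} (hφ : Numbering' φ) {r : ℕ → ℕ} (hr : Computable r) :
    Numbering' fun e => φ (r e) :=
  Partrec₂.comp hφ (hr.comp .fst) .snd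

theorem Acceptable.comp {φ : ℕ → ℕ →. ℕ} (hφ : Acceptable φ) {r s : ℕ → ℕ} (hs : Computable s)
    (hrs : LeftInverse r s) : Acceptable fun e => φ (r e) := by
  intro χ hχ
  obtain ⟨f, hf, hφf⟩ := hφ χ hχ
  exact ⟨fun e => s (f e), hs.comp hf, fun e => by simp only [hrs (f e), hφf]⟩

theorem numbering'_eval : Numbering' fun e => (ofNat Code e).eval :=
  Code.eval_part.comp ((Computable.ofNat _).comp .fst) .snd

theorem acceptable_eval : Acceptable fun e => (ofNat Code e).eval := by
  intro χ hχ
  obtain ⟨c, hc⟩ := Code.exists_code.1 (Partrec₂.unpaired'.2 hχ)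
  obtain ⟨F, hF, hFeval⟩ := Code.smn
  refine ⟨fun e => encode (F c e), Computable.encode.comp (hF.comp (.const c) .id), fun e => ?_⟩
  funext x
  simp [hFeval, hc, Nat.unpaired]

end Acceptable

section Slowdown

def slowdown (g : ℕ → ℕ) : ℕ → ℕ
  | 0 => 0
  | e + 1 => min (slowdown g e + 1) (g (e + 1) - 1)

theorem computable_slowdown {g : ℕ → ℕ} (hg : Computable g) : Computable (slowdown g) :=
  (Computable.nat_rec .id (.const 0) (Primrec.nat_min.to_comp.comp
    (Computable.succ.comp (Computable.snd.comp .snd))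
    (Primrec.nat_sub.to_comp.comp (hg.comp (Computable.succ.comp (Computable.fst.comp .snd)))
      (.const 1))).to₂).of_eq fun n => by
    dsimp only [id]
    induction n with
    | zero => rfl
    | succ n ih => simp [ih, slowdown]

variable {g : ℕ → ℕ} (hmono : Monotone g) (h0 : 1 ≤ g 0)
include hmono h0

theorem slowdown_lt (e : ℕ) : slowdown g e < g e := by
  cases e with
  | zero => exact h0
  | succ e => have := h0.trans (hmono (e + 1).zero_le); simp only [slowdown]; omega

theorem slowdown_monotone : Monotone (slowdown g) := by
  refine monotone_nat_of_le_succ fun e => ?_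
  have := slowdown_lt hmono h0 e
  have := hmono (Nat.le_add_right e 1)
  simp only [slowdown]
  omega

theorem slowdown_surjective (hub : ∀ m, ∃ n, m ≤ g n) : Surjective (slowdown g) := by
  refine Nat.surjective_of_le_succ rfl (fun e => min_le_left _ _) fun v => ?_
  induction v with
  | zero => exact ⟨0, le_rfl⟩
  | succ v ih =>
    obtain ⟨e, he⟩ := ih
    obtain ⟨N, hN⟩ := hub (v + 2)
    have := slowdown_monotone hmono h0 (le_max_right N e)
    have := hmono ((le_max_left N e).trans (Nat.le_add_right _ 1))
    exact ⟨max N e + 1, by simp only [slowdown]; omega⟩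

end Slowdown

/-- For every computable order `g` with `g 0 ≥ 1` there is an acceptable
numbering `ψ` and a computable shortlist function of size at most `g(e)`
capturing `min_ψ(e)`. -/
theorem shortlist_of_order
    (g : ℕ → ℕ) (hg : Computable g) (hmono : Monotone g)
    (hub : ∀ m, ∃ n, m ≤ g n) (h0 : 1 ≤ g 0) :
    ∃ ψ : ℕ → ℕ →. ℕ, Numbering' ψ ∧ Acceptable ψ ∧
      ∃ f : ℕ → Finset ℕ, Computable f ∧
        ∀ e, (f e).card ≤ g e ∧ minIndex ψ e ∈ f e := by
  set r := slowdown g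
  have hr : Surjective r := slowdown_surjective hmono h0 hub
  have hrmono : Monotone r := slowdown_monotone hmono h0
  have hsc : Computable (firstPreimage hr) := computable_firstPreimage hr (computable_slowdown hg)
  refine ⟨fun e => (ofNat Code (r e)).eval, numbering'_eval.comp (computable_slowdown hg),
    acceptable_eval.comp hsc (apply_firstPreimage hr),
    fun e => (Finset.range (r e + 1)).image (firstPreimage hr),
    (computable_image_range (firstPreimage_strictMono hr hrmono) hsc).comp
      (Computable.succ.comp (computable_slowdown hg)), fun e => ⟨?_, ?_⟩⟩
  · have : r e < g e := slowdown_lt hmono h0 e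
    exact Finset.card_image_le.trans (by rw [Finset.card_range]; omega)
  · exact minIndex_comp_mem_image (fun v => (ofNat Code v).eval) hr hrmono e
end
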